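/- arXiv:1404.4313 — 2 statements merged into one kernel-verified Lean document; each statement's English description precedes it below -/
import Mathlib

section
/- Let x₀ < x₁ < ... < x_N be fixed points in ℝ and let B_MT be the set of functions ψ: ℝ → ℝ with sup|ψ| ≤ 1 that are Lipschitz with constant ≤ 1 on each of the intervals (-∞,x₀], (x₀,x₁], ..., (x_{N-1},x_N], (x_N,∞). Then ρ_MT(μ₁,μ₂) := sup_{ψ ∈ B_MT} ∫ψ d(μ₁-μ₂) satisfies ρ_MT(δ_{x₁}, δ_{x₁+ε}) = 2 for every 0 < ε < x₂ - x₁. -/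
open MeasureTheory

/-- Membership in `B_MT`: bounded Borel, `|ψ| ≤ 1`, `1`-Lipschitz on each of the
intervals `(-∞,x₀]`, `(x_{i-1},x_i]`, `(x_N,∞)`. -/
def memBMT (N : ℕ) (x : Fin (N + 1) → ℝ) (ψ : ℝ → ℝ) : Prop :=
  Measurable ψ ∧ (∀ y, |ψ y| ≤ 1) ∧
  LipschitzOnWith 1 ψ (Set.Iic (x 0)) ∧
  (∀ i : Fin N, LipschitzOnWith 1 ψ (Set.Ioc (x i.castSucc) (x i.succ))) ∧
  LipschitzOnWith 1 ψ (Set.Ioi (x (Fin.last N)))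

/-- Measure-transmission metric. -/
noncomputable def rhoMT (N : ℕ) (x : Fin (N + 1) → ℝ) (μ ν : Measure ℝ) : ℝ :=
  sSup {r : ℝ | ∃ ψ : ℝ → ℝ, memBMT N x ψ ∧ r = (∫ y, ψ y ∂μ) - ∫ y, ψ y ∂ν}

lemma lipOn_const {f : ℝ → ℝ} {s : Set ℝ} {c : ℝ} (h : ∀ y ∈ s, f y = c) :
    LipschitzOnWith 1 f s := fun a ha b hb => by
  simp [edist_dist, h a ha, h b hb]

/-- `ρ_MT(δ_{x₁}, δ_{x₁+ε}) = 2` for `0 < ε < x₂ - x₁`. -/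
theorem stmt3 (N : ℕ) (hN : 2 ≤ N) (x : Fin (N + 1) → ℝ) (hx : StrictMono x)
    (ε : ℝ) (hε : 0 < ε)
    (hε2 : ε < x ⟨2, by omega⟩ - x ⟨1, by omega⟩) :
    rhoMT N x (Measure.dirac (x ⟨1, by omega⟩))
      (Measure.dirac (x ⟨1, by omega⟩ + ε)) = 2 := by
  set x1 : ℝ := x ⟨1, by omega⟩ with hx1
  set ψ : ℝ → ℝ := fun y => if y ≤ x1 then (1:ℝ) else -1 with hψ
  have hmono := hx.monotone
  have hmem : memBMT N x ψ := by
    refine ⟨?_, ?_, ?_, ?_, ?_⟩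
    · exact Measurable.ite (measurableSet_Iic) measurable_const measurable_const
    · intro y; by_cases h : y ≤ x1 <;> simp [hψ, h]
    · apply lipOn_const (c := 1)
      intro y hy
      have : y ≤ x1 := le_trans hy (hmono (by simp [Fin.le_def]))
      simp [hψ, this]
    · intro i
      rcases Nat.eq_zero_or_pos i.val with h0 | hpos
      · apply lipOn_const (c := 1)
        intro y hy
        have hi : i.succ = ⟨1, by omega⟩ := by
          ext; simp [Fin.val_succ, h0]
        have : y ≤ x1 := by rw [hx1, ← hi]; exact hy.2
        simp [hψ, this]
      · apply lipOn_const (c := -1)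
        intro y hy
        have h1 : x1 ≤ x i.castSucc := hmono (by simp [Fin.le_def]; omega)
        have : ¬ y ≤ x1 := not_le.2 (lt_of_le_of_lt h1 hy.1)
        simp [hψ, this]
    · apply lipOn_const (c := -1)
      intro y hy
      have h1 : x1 ≤ x (Fin.last N) := hmono (by simp [Fin.le_def]; omega)
      have : ¬ y ≤ x1 := not_le.2 (lt_of_le_of_lt h1 hy)
      simp [hψ, this]
  have hval : (∫ y, ψ y ∂(Measure.dirac x1)) - (∫ y, ψ y ∂(Measure.dirac (x1 + ε))) = 2 := by
    rw [integral_dirac, integral_dirac]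
    have h1 : ψ x1 = 1 := by simp [hψ]
    have h2 : ψ (x1 + ε) = -1 := by
      have : ¬ (x1 + ε ≤ x1) := by linarith
      simp [hψ, this]
    rw [h1, h2]; norm_num
  set S : Set ℝ := {r : ℝ | ∃ ψ : ℝ → ℝ, memBMT N x ψ ∧
      r = (∫ y, ψ y ∂(Measure.dirac x1)) - ∫ y, ψ y ∂(Measure.dirac (x1 + ε))} with hS
  have h2S : (2:ℝ) ∈ S := ⟨ψ, hmem, hval.symm⟩
  have hub : ∀ r ∈ S, r ≤ 2 := by
    rintro r ⟨φ, ⟨hm, hb, _⟩, rfl⟩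
    rw [integral_dirac, integral_dirac]
    have := abs_le.1 (hb x1)
    have := abs_le.1 (hb (x1 + ε))
    linarith [this.1, this.2]
  have : rhoMT N x (Measure.dirac x1) (Measure.dirac (x1 + ε)) = sSup S := rfl
  rw [this]
  exact le_antisymm (Real.sSup_le hub (by norm_num)) (le_csSup ⟨2, hub⟩ h2S)
end

section
/- Let c > 0 be constant, x₁ ∈ ℝ, ε > 0, and define μ(ε) := e^{−cε}δ_{x₁} + c·e^{−c(ε−(x−x₁))}·1_{[x₁,x₁+ε]}(x) dx and ν(ε) := δ_{x₁}. Then, for the measure-transmission metric ρ_MT associated with discrete points including x₁ (with x₁ the left endpoint of an interval of length > ε in the partition), ρ_MT(μ(ε), ν(ε)) = 2(1 − e^{−cε}). In particular ρ_MT(μ(ε),ν(ε))/ε → 2c as ε → 0⁺, so no local stability estimate with constant tending to 1 as t → 0⁺ can hold. -/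
open MeasureTheory

open scoped ENNReal NNReal

lemma lip_const' {ψ : ℝ → ℝ} {s : Set ℝ} (h : ∀ a ∈ s, ∀ b ∈ s, ψ a = ψ b) :
    LipschitzOnWith 1 ψ s := by
  intro a ha b hb
  simp [edist_dist, h a ha b hb]

lemma bdd_integrable' {μ : Measure ℝ} [IsFiniteMeasure μ] {ψ : ℝ → ℝ}
    (hm : Measurable ψ) (hb : ∀ y, |ψ y| ≤ 1) : Integrable ψ μ :=
  (integrable_const (1:ℝ)).mono' hm.aestronglyMeasurable
    (Filter.Eventually.of_forall (by simpa using hb))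

lemma density_int' (c ε x₁ : ℝ) (hε : 0 < ε) :
    ∫ y in Set.Ioc x₁ (x₁ + ε), c * Real.exp (-(c * (ε - (y - x₁)))) =
      1 - Real.exp (-(c * ε)) := by
  have hle : x₁ ≤ x₁ + ε := by linarith
  have hcont : Continuous fun y => c * Real.exp (-(c * (ε - (y - x₁)))) := by fun_prop
  rw [← intervalIntegral.integral_of_le hle]
  have := intervalIntegral.integral_eq_sub_of_hasDerivAt
    (f := fun y => Real.exp (-(c * (ε - (y - x₁)))))
    (f' := fun y => c * Real.exp (-(c * (ε - (y - x₁)))))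
    (a := x₁) (b := x₁ + ε)
    (fun y _ => by
      have hg : HasDerivAt (fun y : ℝ => -(c * (ε - (y - x₁)))) c y := by
        have : HasDerivAt (fun y : ℝ => c * y + (-(c*ε) - c*x₁)) c y := by
          simpa using ((hasDerivAt_id y).const_mul c).add_const (-(c*ε) - c*x₁)
        convert this using 2 with z
        ring
      simpa [mul_comm] using hg.exp)
    (hcont.intervalIntegrable _ _)
  rw [this]
  simp

lemma int_decomp (c ε x₁ : ℝ) (hc : 0 < c) (hε : 0 < ε) {ψ : ℝ → ℝ}
    (hm : Measurable ψ) (hb : ∀ y, |ψ y| ≤ 1) :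
    (∫ y, ψ y ∂(ENNReal.ofReal (Real.exp (-(c * ε))) • Measure.dirac x₁ +
        (volume.restrict (Set.Icc x₁ (x₁ + ε))).withDensity
          (fun y => ENNReal.ofReal (c * Real.exp (-(c * (ε - (y - x₁)))))))) -
      ∫ y, ψ y ∂(Measure.dirac x₁) =
    (Real.exp (-(c * ε)) - 1) * ψ x₁ +
      ∫ y in Set.Ioc x₁ (x₁ + ε), ψ y * (c * Real.exp (-(c * (ε - (y - x₁))))) := by
  set f : ℝ → ℝ := fun y => c * Real.exp (-(c * (ε - (y - x₁)))) with hf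
  have hfpos : ∀ y, 0 < f y := fun y => mul_pos hc (Real.exp_pos _)
  have hfcont : Continuous f := by fun_prop
  have h1 : Integrable ψ (ENNReal.ofReal (Real.exp (-(c * ε))) • Measure.dirac x₁) :=
    (bdd_integrable' hm hb).smul_measure ENNReal.ofReal_ne_top
  have hψf : Integrable (fun y => ψ y * f y) (volume.restrict (Set.Icc x₁ (x₁ + ε))) := by
    refine (hfcont.integrableOn_Icc (μ := volume)).mono'
      (hm.mul hfcont.measurable).aestronglyMeasurable
      (Filter.Eventually.of_forall fun y => ?_)
    have := hb y
    have := (hfpos y).le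
    rw [norm_mul]
    calc ‖ψ y‖ * ‖f y‖ ≤ 1 * ‖f y‖ := by
          apply mul_le_mul_of_nonneg_right (by simpa using hb y) (norm_nonneg _)
      _ = f y := by rw [one_mul, Real.norm_of_nonneg (hfpos y).le]
  have h2 : Integrable ψ ((volume.restrict (Set.Icc x₁ (x₁ + ε))).withDensity
      (fun y => ENNReal.ofReal (f y))) := by
    rw [integrable_withDensity_iff (hfcont.measurable.ennreal_ofReal)
      (Filter.Eventually.of_forall fun y => ENNReal.ofReal_lt_top)]
    simpa [ENNReal.toReal_ofReal (hfpos _).le] using hψf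
  rw [integral_add_measure h1 h2, integral_smul_measure, integral_dirac]
  have hwd : ∫ y, ψ y ∂((volume.restrict (Set.Icc x₁ (x₁ + ε))).withDensity
      (fun y => ENNReal.ofReal (f y))) = ∫ y in Set.Icc x₁ (x₁ + ε), ψ y * f y := by
    have : (fun y => ENNReal.ofReal (f y)) =
        fun y => (((f y).toNNReal : NNReal) : ℝ≥0∞) := rfl
    rw [this, integral_withDensity_eq_integral_smul (by fun_prop) ψ]
    congr 1
    ext y
    simp [NNReal.smul_def, Real.coe_toNNReal _ (hfpos y).le, mul_comm]
  rw [hwd, integral_Icc_eq_integral_Ioc]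
  have hA : (ENNReal.ofReal (Real.exp (-(c * ε)))).toReal = Real.exp (-(c * ε)) :=
    ENNReal.toReal_ofReal (Real.exp_pos _).le
  rw [hA]
  ring_nf
  simp [smul_eq_mul]
  congr 1
  ext t
  simp only [hf]
  ring_nf

set_option maxHeartbeats 1000000 in
/-- for `μ(ε) = e^{−cε}δ_{x₁} + c e^{−c(ε−(y−x₁))}1_{[x₁,x₁+ε]}(y)dy`
and `ν = δ_{x₁}`, with `x₁` a partition point whose interval to the right has
length `> ε`, one has
`2(1−e^{−cε}) − 2cε² ≤ ρ_MT(μ(ε),ν) ≤ 2(1−e^{−cε})`; in particular the ratio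
`ρ_MT/ε` tends to `2c` as `ε → 0⁺`, so no local stability constant tending to
`1` can hold. -/
theorem stmt15 (N : ℕ) (x : Fin (N + 1) → ℝ) (hx : StrictMono x)
    (i : Fin N) (x₁ : ℝ) (hx₁ : x (Fin.castSucc i) = x₁)
    (c ε : ℝ) (hc : 0 < c) (hε : 0 < ε) (hlen : x₁ + ε < x (Fin.succ i)) :
    2 * (1 - Real.exp (-(c * ε))) - 2 * c * ε ^ 2 ≤
      rhoMT N x
        (ENNReal.ofReal (Real.exp (-(c * ε))) • Measure.dirac x₁ +
          (volume.restrict (Set.Icc x₁ (x₁ + ε))).withDensity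
            (fun y => ENNReal.ofReal (c * Real.exp (-(c * (ε - (y - x₁)))))))
        (Measure.dirac x₁) ∧
    rhoMT N x
        (ENNReal.ofReal (Real.exp (-(c * ε))) • Measure.dirac x₁ +
          (volume.restrict (Set.Icc x₁ (x₁ + ε))).withDensity
            (fun y => ENNReal.ofReal (c * Real.exp (-(c * (ε - (y - x₁)))))))
        (Measure.dirac x₁) ≤ 2 * (1 - Real.exp (-(c * ε))) := by
  set A := Real.exp (-(c * ε)) with hAdef
  set f : ℝ → ℝ := fun y => c * Real.exp (-(c * (ε - (y - x₁)))) with hfdef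
  have hfpos : ∀ y, 0 < f y := fun y => mul_pos hc (Real.exp_pos _)
  have hfcont : Continuous f := by fun_prop
  have hA1 : A ≤ 1 := by
    calc A = Real.exp (-(c*ε)) := rfl
      _ ≤ Real.exp 0 := Real.exp_le_exp.mpr (by nlinarith)
      _ = 1 := Real.exp_zero
  have hfIcc : IntegrableOn f (Set.Icc x₁ (x₁ + ε)) volume := hfcont.integrableOn_Icc
  have hfInt : IntegrableOn f (Set.Ioc x₁ (x₁ + ε)) volume :=
    hfIcc.mono_set Set.Ioc_subset_Icc_self
  -- upper bound for every element of the sup set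
  have hub : ∀ r ∈ {r : ℝ | ∃ ψ : ℝ → ℝ, memBMT N x ψ ∧
      r = (∫ y, ψ y ∂(ENNReal.ofReal A • Measure.dirac x₁ +
        (volume.restrict (Set.Icc x₁ (x₁ + ε))).withDensity
          (fun y => ENNReal.ofReal (f y)))) - ∫ y, ψ y ∂(Measure.dirac x₁)},
      r ≤ 2 * (1 - A) := by
    rintro r ⟨ψ, ⟨hm, hb, -, -, -⟩, rfl⟩
    rw [int_decomp c ε x₁ hc hε hm hb]
    have t1 : (A - 1) * ψ x₁ ≤ 1 - A := by
      have h := abs_le.mp (hb x₁)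
      nlinarith [h.1, h.2]
    have hψfInt : Integrable (fun y => ψ y * f y)
        (volume.restrict (Set.Ioc x₁ (x₁ + ε))) := by
      refine hfInt.mono' (hm.mul hfcont.measurable).aestronglyMeasurable
        (Filter.Eventually.of_forall fun y => ?_)
      rw [norm_mul]
      calc ‖ψ y‖ * ‖f y‖ ≤ 1 * ‖f y‖ :=
            mul_le_mul_of_nonneg_right (by simpa using hb y) (norm_nonneg _)
        _ = f y := by rw [one_mul, Real.norm_of_nonneg (hfpos y).le]
    have t2 : ∫ y in Set.Ioc x₁ (x₁ + ε), ψ y * f y ≤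
        ∫ y in Set.Ioc x₁ (x₁ + ε), f y := by
      refine setIntegral_mono_on hψfInt hfInt measurableSet_Ioc fun y _ => ?_
      have h := abs_le.mp (hb y)
      nlinarith [hfpos y, h.2]
    have t3 : ∫ y in Set.Ioc x₁ (x₁ + ε), f y = 1 - A := density_int' c ε x₁ hε
    linarith [t2.trans_eq t3]
  constructor
  · -- lower bound: use the test function ψ₀
    set ψ₀ : ℝ → ℝ := fun y => if y ≤ x₁ then (-1 : ℝ) else 1 with hψ₀def
    have hψ₀m : Measurable ψ₀ := by
      apply Measurable.ite _ measurable_const measurable_const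
      exact measurableSet_Iic (a := x₁)
    have hψ₀b : ∀ y, |ψ₀ y| ≤ 1 := by
      intro y; by_cases h : y ≤ x₁ <;> simp [hψ₀def, h]
    have hmem : memBMT N x ψ₀ := by
      refine ⟨hψ₀m, hψ₀b, ?_, ?_, ?_⟩
      · refine lip_const' fun a ha b hb => ?_
        have hx0 : x 0 ≤ x₁ := hx₁ ▸ hx.monotone (Fin.zero_le _)
        simp only [hψ₀def]
        rw [if_pos (le_trans ha hx0), if_pos (le_trans hb hx0)]
      · intro j
        refine lip_const' fun a ha b hb => ?_
        rcases le_or_gt i j with hij | hij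
        · have h1 : x₁ ≤ x j.castSucc := hx₁ ▸ hx.monotone (by simpa using hij)
          simp only [hψ₀def]
          rw [if_neg (not_le.mpr (lt_of_le_of_lt h1 ha.1)),
            if_neg (not_le.mpr (lt_of_le_of_lt h1 hb.1))]
        · have h1 : x j.succ ≤ x₁ := by
            rw [← hx₁]
            exact hx.monotone (Fin.succ_le_castSucc_iff.mpr hij)
          simp only [hψ₀def]
          rw [if_pos (le_trans ha.2 h1), if_pos (le_trans hb.2 h1)]
      · refine lip_const' fun a ha b hb => ?_
        have h1 : x₁ < x (Fin.last N) := by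
          rw [← hx₁]
          exact lt_of_lt_of_le (hx Fin.castSucc_lt_succ) (hx.monotone (Fin.le_last _))
        simp only [hψ₀def]
        rw [if_neg (not_le.mpr (lt_trans h1 ha)), if_neg (not_le.mpr (lt_trans h1 hb))]
    have hval : (∫ y, ψ₀ y ∂(ENNReal.ofReal A • Measure.dirac x₁ +
        (volume.restrict (Set.Icc x₁ (x₁ + ε))).withDensity
          (fun y => ENNReal.ofReal (f y)))) - ∫ y, ψ₀ y ∂(Measure.dirac x₁) =
        2 * (1 - A) := by
      rw [int_decomp c ε x₁ hc hε hψ₀m hψ₀b]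
      have e1 : ψ₀ x₁ = -1 := if_pos le_rfl
      have e2 : ∫ y in Set.Ioc x₁ (x₁ + ε), ψ₀ y * f y =
          ∫ y in Set.Ioc x₁ (x₁ + ε), f y := by
        refine setIntegral_congr_fun measurableSet_Ioc fun y hy => ?_
        simp only [hψ₀def]
        rw [if_neg (not_le.mpr hy.1), one_mul]
      rw [e1, e2, density_int' c ε x₁ hε]
      ring
    have hBdd : BddAbove {r : ℝ | ∃ ψ : ℝ → ℝ, memBMT N x ψ ∧
        r = (∫ y, ψ y ∂(ENNReal.ofReal A • Measure.dirac x₁ +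
          (volume.restrict (Set.Icc x₁ (x₁ + ε))).withDensity
            (fun y => ENNReal.ofReal (f y)))) - ∫ y, ψ y ∂(Measure.dirac x₁)} :=
      ⟨2 * (1 - A), hub⟩
    have hle : 2 * (1 - A) ≤ rhoMT N x
        (ENNReal.ofReal A • Measure.dirac x₁ +
          (volume.restrict (Set.Icc x₁ (x₁ + ε))).withDensity
            (fun y => ENNReal.ofReal (f y))) (Measure.dirac x₁) :=
      le_csSup hBdd ⟨ψ₀, hmem, hval.symm⟩
    have : 0 ≤ 2 * c * ε ^ 2 := by positivity
    linarith
  · refine Real.sSup_le hub ?_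
    linarith
end
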